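/- arXiv:1410.0661 — 4 statements merged into one kernel-verified Lean document; each statement's English description precedes it below -/
import Mathlib

section
/- For any bounded measurable function h : T → ℝ, any prior probability measure π on T, and any probability measure ρ on T with KL(ρ,π) < ∞, one has log(∫ exp(h) dπ) = ∫ h dρ − KL(ρ,π) + KL(ρ, π_{exp(h)}), where π_{exp(h)} is the probability measure with density dπ_{exp(h)}/dπ = exp(h(t)) / ∫ exp(h) dπ. -/
/-!
The density of `π_{exp h}` with respect to `π` is `exp h / Z` with `Z = ∫ exp h dπ`, so
`log (dρ/dπ_{exp h}) = log (dρ/dπ) - h + log Z` holds `ρ`-a.e.; integrating against `ρ` gives the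
identity. Between probability measures `KL` coincides with `klDiv`, so finiteness makes its real
part exactly that integral, which is nonnegative by Gibbs' inequality.
-/

open MeasureTheory Real

noncomputable section
open Classical in

/-- Kullback–Leibler divergence: `∫ log(dρ/dpr) dρ` when `ρ ≪ pr` and the
integrand is integrable, `∞` otherwise. -/
def KL {T : Type*} [MeasurableSpace T] (ρ pr : Measure T) : ENNReal :=
  if ρ ≪ pr ∧ Integrable (fun t => Real.log (ρ.rnDeriv pr t).toReal) ρ then
    ENNReal.ofReal (∫ t, Real.log (ρ.rnDeriv pr t).toReal ∂ρ)
  else ⊤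

open InformationTheory

lemma KL_eq_klDiv {T : Type*} [MeasurableSpace T] {μ ν : Measure T}
    (hμν : μ Set.univ = ν Set.univ) :
    KL μ ν = klDiv μ ν := by
  rw [KL, klDiv_def]
  have hreal : ν.real Set.univ = μ.real Set.univ := by simp only [measureReal_def, hμν]
  simp only [hreal, add_sub_cancel_right]
  rfl

lemma toReal_KL_eq_integral_llr {T : Type*} [MeasurableSpace T] {μ ν : Measure T}
    [IsProbabilityMeasure μ] [IsProbabilityMeasure ν] (hμν : μ ≪ ν) :
    (KL μ ν).toReal = ∫ t, llr μ ν t ∂μ := by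
  have hmass : μ Set.univ = ν Set.univ := by simp only [measure_univ]
  rw [KL_eq_klDiv hmass, toReal_klDiv_of_measure_eq hμν hmass]

lemma integrable_exp_of_le {T : Type*} [MeasurableSpace T] (μ : Measure T)
    [IsFiniteMeasure μ] {f : T → ℝ} (hf : Measurable f) {C : ℝ} (hC : ∀ t, f t ≤ C) :
    Integrable (fun t => exp (f t)) μ :=
  .of_bound hf.exp.aestronglyMeasurable (exp C) <| ae_of_all _ fun t => by
    rw [norm_of_nonneg (exp_pos _).le]
    exact exp_le_exp.2 (hC t)

theorem gibbs_variational_identity {T : Type*} [MeasurableSpace T]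
    (pr : Measure T) [IsProbabilityMeasure pr]
    (h : T → ℝ) (hmeas : Measurable h) (hbdd : ∃ C, ∀ t, |h t| ≤ C)
    (ρ : Measure T) [IsProbabilityMeasure ρ] (hKL : KL ρ pr < ⊤) :
    Real.log (∫ t, Real.exp (h t) ∂pr)
      = ∫ t, h t ∂ρ - (KL ρ pr).toReal
        + (KL ρ (pr.withDensity fun t =>
            ENNReal.ofReal (Real.exp (h t) / ∫ u, Real.exp (h u) ∂pr))).toReal := by
  obtain ⟨C, hC⟩ := hbdd
  have hexp : Integrable (fun t => exp (h t)) pr := 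
    integrable_exp_of_le pr hmeas fun t => (abs_le.1 (hC t)).2
  have hhρ : Integrable h ρ := .of_bound hmeas.aestronglyMeasurable C (ae_of_all _ hC)
  obtain ⟨hac, hllr⟩ : ρ ≪ pr ∧ Integrable (llr ρ pr) ρ := by
    rw [← klDiv_ne_top_iff, ← KL_eq_klDiv (by simp only [measure_univ])]
    exact hKL.ne
  have : IsProbabilityMeasure (pr.tilted h) := isProbabilityMeasure_tilted hexp
  change _ = _ - _ + (KL ρ (pr.tilted h)).toReal
  rw [toReal_KL_eq_integral_llr hac,
    toReal_KL_eq_integral_llr (hac.trans (absolutelyContinuous_tilted hexp)),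
    integral_llr_tilted_right hac hhρ hexp hllr]
  ring
end
end

section
/- Let Z be a standard Gaussian vector in ℝⁿ, D a diagonal matrix with nonnegative entries d₁,…,dₙ all at most V, and a ∈ ℝⁿ. Then for any β > 4σ²V, E[exp((2σ²/β)(ZᵀDZ + (2/√β) Zᵀ√D a))] ≤ exp((2σ²/β)(tr(D) + (2σ²/(β(β−4σ²V)))(β tr(D²) + 2 ‖√D a‖₂²))). -/
/-!
Coordinatewise, `E exp(t X² + s X) = (1 - 2t)^(-1/2) exp(s² / (2(1 - 2t)))` for a
standard Gaussian `X` and `t < 1/2`, by completing the square in the Gaussian integral.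
The series of `-log(1 - x)` is dominated termwise by `x + x²/2 + x³/2 + ⋯`, which bounds
the prefactor by `exp(t + t²/(1 - 2t))`. Replacing `1 - 2t = 1 - 4σ²dᵢ/β` by its lower
bound `1 - 4σ²V/β` and multiplying the independent coordinates gives the claim.
-/

open MeasureTheory ProbabilityTheory Real

theorem neg_log_one_sub_le {x : ℝ} (hx0 : 0 ≤ x) (hx1 : x < 1) :
    -log (1 - x) ≤ x + x ^ 2 / (2 * (1 - x)) := by
  have hlog := hasSum_pow_div_log_of_abs_lt_one (abs_lt.mpr ⟨by linarith, hx1⟩)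
  have hmajorant : HasSum (fun n : ℕ => x / 2 * x ^ n + if n = 0 then x / 2 else 0)
      (x / 2 * (1 - x)⁻¹ + x / 2) :=
    ((hasSum_geometric_of_lt_one hx0 hx1).mul_left _).add (hasSum_ite_eq 0 _)
  have htermwise (n : ℕ) :
      x ^ (n + 1) / (n + 1) ≤ x / 2 * x ^ n + if n = 0 then x / 2 else 0 := by
    cases n with
    | zero => norm_num
    | succ m =>
      rw [if_neg m.succ_ne_zero, add_zero, show x / 2 * x ^ (m + 1) = x ^ (m + 1 + 1) / 2 by ring]
      gcongr
      push_cast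
      linarith
  calc -log (1 - x) ≤ x / 2 * (1 - x)⁻¹ + x / 2 := hasSum_le htermwise hlog hmajorant
    _ = x + x ^ 2 / (2 * (1 - x)) := by field_simp [(by linarith : 1 - x ≠ 0)]; ring

theorem inv_sqrt_one_sub_le_exp {x : ℝ} (hx0 : 0 ≤ x) (hx1 : x < 1) :
    (√(1 - x))⁻¹ ≤ exp (x / 2 + x ^ 2 / (4 * (1 - x))) := by
  have hsqrt : √(1 - x) = exp (log (1 - x) / 2) := by
    rw [exp_half, exp_log (by linarith)]
  rw [hsqrt, ← exp_neg, exp_le_exp]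
  have := neg_log_one_sub_le hx0 hx1
  have : x ^ 2 / (4 * (1 - x)) = x ^ 2 / (2 * (1 - x)) / 2 := by
    field_simp [(by linarith : 1 - x ≠ 0)]; ring
  linarith

theorem integral_exp_quadratic {b : ℝ} (hb : b < 0) (c : ℝ) :
    ∫ x : ℝ, exp (b * x ^ 2 + c * x) = √(π / -b) * exp (-c ^ 2 / (4 * b)) := by
  have complete_square : ∀ x : ℝ,
      exp (b * x ^ 2 + c * x) = exp (b * (x + c / (2 * b)) ^ 2) * exp (-c ^ 2 / (4 * b)) := by
    intro x
    rw [← exp_add]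
    congr 1
    field_simp [hb.ne]
    ring
  simp_rw [complete_square]
  rw [integral_mul_const, integral_add_right_eq_self (fun x => exp (b * x ^ 2)),
    ← integral_gaussian (-b)]
  simp_rw [neg_neg]

theorem integral_exp_quadratic_gaussianReal {t : ℝ} (ht : t < 1 / 2) (s : ℝ) :
    ∫ x, exp (t * x ^ 2 + s * x) ∂gaussianReal 0 1
      = (√(1 - 2 * t))⁻¹ * exp (s ^ 2 / (2 * (1 - 2 * t))) := by
  have h12 : 0 < 1 - 2 * t := by linarith
  have hdensity : ∀ x : ℝ, gaussianPDFReal 0 1 x • exp (t * x ^ 2 + s * x)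
      = (√(2 * π))⁻¹ * exp ((t - 1 / 2) * x ^ 2 + s * x) := by
    intro x
    simp only [gaussianPDFReal_def, NNReal.coe_one, mul_one, sub_zero, smul_eq_mul]
    rw [mul_assoc, ← exp_add]
    ring_nf
  simp_rw [integral_gaussianReal_eq_integral_smul one_ne_zero, hdensity]
  rw [integral_const_mul, integral_exp_quadratic (by linarith) s,
    show -(t - 1 / 2) = (1 - 2 * t) / 2 by ring, div_div_eq_mul_div, mul_comm π 2,
    sqrt_div' _ h12.le, show 4 * (t - 1 / 2) = -(2 * (1 - 2 * t)) by ring, div_neg, neg_div,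
    neg_neg]
  have : 0 < √(2 * π) := by positivity
  field_simp

theorem integral_exp_quadratic_gaussianReal_le {t u : ℝ} (ht : 0 ≤ t) (htu : 2 * t ≤ u)
    (hu : u < 1) (s : ℝ) :
    ∫ x, exp (t * x ^ 2 + s * x) ∂gaussianReal 0 1
      ≤ exp (t + (t ^ 2 + s ^ 2 / 2) / (1 - u)) := by
  have h2t : 0 < 1 - 2 * t := by linarith
  have hu' : 0 < 1 - u := by linarith
  rw [integral_exp_quadratic_gaussianReal (by linarith) s]
  calc (√(1 - 2 * t))⁻¹ * exp (s ^ 2 / (2 * (1 - 2 * t)))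
      ≤ exp (2 * t / 2 + (2 * t) ^ 2 / (4 * (1 - 2 * t)))
          * exp (s ^ 2 / (2 * (1 - 2 * t))) := by
        gcongr
        exact inv_sqrt_one_sub_le_exp (by linarith) (by linarith)
    _ = exp (t + (t ^ 2 + s ^ 2 / 2) / (1 - 2 * t)) := by
        rw [← exp_add]
        congr 1
        field_simp
        ring
    _ ≤ exp (t + (t ^ 2 + s ^ 2 / 2) / (1 - u)) := by
        gcongr

theorem integral_exp_sum_quadratic_pi_gaussianReal_le {ι : Type*} [Fintype ι] {t : ι → ℝ}
    {u : ℝ} (ht : ∀ i, 0 ≤ t i) (htu : ∀ i, 2 * t i ≤ u) (hu : u < 1) (s : ι → ℝ) :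
    ∫ z : ι → ℝ, exp (∑ i, (t i * z i ^ 2 + s i * z i))
        ∂(Measure.pi fun _ => gaussianReal 0 1)
      ≤ exp (∑ i, (t i + (t i ^ 2 + s i ^ 2 / 2) / (1 - u))) := by
  simp_rw [exp_sum]
  rw [integral_fintype_prod_eq_prod fun i x => exp (t i * x ^ 2 + s i * x)]
  exact Finset.prod_le_prod (fun i _ => integral_nonneg fun x => (exp_pos _).le)
    fun i _ => integral_exp_quadratic_gaussianReal_le (ht i) (htu i) hu (s i)

theorem gaussian_vector_quadratic_mgf {n : ℕ} (σ2 V β : ℝ)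
    (hσ : 0 < σ2) (hV : 0 < V) (hβ : 4 * σ2 * V < β)
    (d a : Fin n → ℝ) (hd0 : ∀ i, 0 ≤ d i) (hdV : ∀ i, d i ≤ V) :
    ∫ z : Fin n → ℝ,
        Real.exp ((2 * σ2 / β) * ((∑ i, d i * z i ^ 2)
          + (2 / Real.sqrt β) * ∑ i, Real.sqrt (d i) * a i * z i))
      ∂(Measure.pi fun _ => gaussianReal 0 1)
    ≤ Real.exp ((2 * σ2 / β) * ((∑ i, d i)
        + (2 * σ2 / (β * (β - 4 * σ2 * V)))
          * (β * ∑ i, (d i) ^ 2 + 2 * ∑ i, d i * (a i) ^ 2))) := by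
  have hβ0 : 0 < β := lt_trans (by positivity) hβ
  set t : Fin n → ℝ := fun i => 2 * σ2 / β * d i
  set s : Fin n → ℝ := fun i => 2 * σ2 / β * (2 / √β) * (√(d i) * a i)
  set u := 4 * σ2 * V / β
  have htu (i) : 2 * t i ≤ u := by
    show 2 * (2 * σ2 / β * d i) ≤ 4 * σ2 * V / β
    rw [show 2 * (2 * σ2 / β * d i) = 4 * σ2 * d i / β by ring]
    gcongr
    exact hdV i
  have hu : u < 1 := by rwa [div_lt_one hβ0]
  have hexponent (i) : t i + (t i ^ 2 + s i ^ 2 / 2) / (1 - u) = 2 * σ2 / β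
      * (d i + 2 * σ2 / (β * (β - 4 * σ2 * V)) * (β * d i ^ 2 + 2 * (d i * a i ^ 2))) := by
    have hβV : β - 4 * σ2 * V ≠ 0 := by linarith
    simp only [t, s, u, mul_pow, div_pow, sq_sqrt hβ0.le, sq_sqrt (hd0 i)]
    field_simp
  calc _ = ∫ z : Fin n → ℝ, exp (∑ i, (t i * z i ^ 2 + s i * z i))
          ∂(Measure.pi fun _ => gaussianReal 0 1) := by
        congr with z
        congr 1
        simp only [t, s, mul_add, Finset.mul_sum, ← Finset.sum_add_distrib]
        exact Finset.sum_congr rfl fun i _ => by ring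
    _ ≤ exp (∑ i, (t i + (t i ^ 2 + s i ^ 2 / 2) / (1 - u))) :=
      integral_exp_sum_quadratic_pi_gaussianReal_le
        (fun i => mul_nonneg (by positivity) (hd0 i)) htu hu s
    _ = _ := by
        simp only [hexponent, ← Finset.mul_sum, Finset.sum_add_distrib]
end

section
/- With γ = (β − 4σ²V(1+2δ) − √(β − 4σ²V)·√(β − 4σ²V(1+4δ)))/(16σ²δV²) for δ ∈ (0,1], σ² > 0, V > 0: for any β ≥ 4σ²V(1+4δ) one has 0 < 2γV ≤ 1, with strict inequality 2γV < 1 whenever β > 4σ²V(1+4δ). -/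
/-! With `A = β - 4σ²V` and `B = β - 4σ²V(1 + 4δ)` one has `A - B = 16σ²δV`, and the numerator
of `γ` is `(√A - √B)² / 2`. Hence `2γV = (√A - √B)² / (A - B) = (√A - √B) / (√A + √B)`, which lies
in `(0, 1]` because `0 ≤ √B < √A`, and is `< 1` as soon as `B > 0`. -/

namespace Real

theorem add_sub_two_mul_sqrt_mul_sqrt_div_sub {A B : ℝ} (hB : 0 ≤ B) (hBA : B < A) :
    (A + B - 2 * (√A * √B)) / (A - B) = (√A - √B) / (√A + √B) := by
  have hsum : 0 < √A + √B :=
    add_pos_of_pos_of_nonneg (sqrt_pos.2 (hB.trans_lt hBA)) (sqrt_nonneg B)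
  rw [div_eq_div_iff (sub_pos.2 hBA).ne' hsum.ne']
  linear_combination (-2 * √B) * sq_sqrt (hB.trans hBA.le) + (-2 * √A) * sq_sqrt hB

end Real

section SubDivAdd

variable {a b : ℝ}

theorem sub_div_add_pos (hb : 0 ≤ b) (hba : b < a) : 0 < (a - b) / (a + b) :=
  div_pos (sub_pos.2 hba) (by linarith)

theorem sub_div_add_le_one (hb : 0 ≤ b) (hba : b < a) : (a - b) / (a + b) ≤ 1 :=
  (div_le_one (by linarith)).2 (by linarith)

theorem sub_div_add_lt_one (hb : 0 < b) (hba : b < a) : (a - b) / (a + b) < 1 :=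
  (div_lt_one (by linarith)).2 (by linarith)

end SubDivAdd

theorem gamma_bounds_general (σ2 V δ β : ℝ)
    (hσ : 0 < σ2) (hV : 0 < V) (hδ0 : 0 < δ)
    (hβ : 4 * σ2 * V * (1 + 4 * δ) ≤ β) :
    let γ := (β - 4 * σ2 * V * (1 + 2 * δ)
        - Real.sqrt (β - 4 * σ2 * V) * Real.sqrt (β - 4 * σ2 * V * (1 + 4 * δ)))
        / (16 * σ2 * δ * V ^ 2)
    0 < 2 * γ * V ∧ 2 * γ * V ≤ 1
      ∧ (4 * σ2 * V * (1 + 4 * δ) < β → 2 * γ * V < 1) := by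
  intro γ
  set A := β - 4 * σ2 * V
  set B := β - 4 * σ2 * V * (1 + 4 * δ)
  have hB : 0 ≤ B := sub_nonneg.2 hβ
  have hAB : A - B = 16 * σ2 * δ * V := by ring
  have hBA : B < A := by linarith [show 0 < 16 * σ2 * δ * V by positivity]
  have hγ : 2 * γ * V = (A + B - 2 * (√A * √B)) / (A - B) := by
    rw [hAB]
    simp only [γ, A, B]
    field_simp
    ring
  have hsqrt : √B < √A := Real.sqrt_lt_sqrt hB hBA
  rw [hγ, Real.add_sub_two_mul_sqrt_mul_sqrt_div_sub hB hBA]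
  exact ⟨sub_div_add_pos (Real.sqrt_nonneg B) hsqrt,
    sub_div_add_le_one (Real.sqrt_nonneg B) hsqrt,
    fun hβ' => sub_div_add_lt_one (Real.sqrt_pos.2 (sub_pos.2 hβ')) hsqrt⟩

theorem gamma_bounds (σ2 V δ β : ℝ)
    (hσ : 0 < σ2) (hV : 0 < V) (hδ0 : 0 < δ) (hδ1 : δ ≤ 1)
    (hβ : 4 * σ2 * V * (1 + 4 * δ) ≤ β) :
    let γ := (β - 4 * σ2 * V * (1 + 2 * δ)
        - Real.sqrt (β - 4 * σ2 * V) * Real.sqrt (β - 4 * σ2 * V * (1 + 4 * δ)))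
        / (16 * σ2 * δ * V ^ 2)
    0 < 2 * γ * V ∧ 2 * γ * V ≤ 1
      ∧ (4 * σ2 * V * (1 + 4 * δ) < β → 2 * γ * V < 1) :=
  gamma_bounds_general σ2 V δ β hσ hV hδ0 hβ
end

section
/- Let δ > 0 and 0 < V ≤ 1/2, and let γ be the smallest nonnegative root of 2σ²δ(1+2γV)² = γ(β−4σ²V). Then the set N = {ν > 0 : (1+ν)γ < 1} is nonempty if and only if β > 4σ²V + 2σ²δ(1+2V)². -/
/-!
Write `b = √(β - 4σ²V)`, `D = 16σ²δV` and `e = √(2σ²δ)`. The second square root is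
`√(b² - D)` and `γ = (b - √(b² - D))² / (32σ²δV²)`, so `N` is nonempty iff `γ < 1` iff
`b - √(b² - D) < 4eV`. The map `x ↦ x - √(x² - D) = D / (x + √(x² - D))` is strictly
decreasing, and it takes the value `4eV` at `x = e(1 + 2V)`, because `V ≤ 1/2` makes
`√(e²(1 + 2V)² - D) = e(1 - 2V)`. Hence the condition is `b > e(1 + 2V)`, which squares to
`β > 4σ²V + 2σ²δ(1 + 2V)²`.
-/

open Filter Topology

lemma setOf_pos_add_one_mul_lt_one_nonempty_iff (γ : ℝ) :
    {ν : ℝ | 0 < ν ∧ (1 + ν) * γ < 1}.Nonempty ↔ γ < 1 := by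
  constructor
  · rintro ⟨ν, hν, h⟩
    nlinarith
  · intro h
    have hlim : Tendsto (fun ν : ℝ => (1 + ν) * γ) (𝓝[>] 0) (𝓝 γ) := by
      have : Continuous (fun ν : ℝ => (1 + ν) * γ) := by fun_prop
      simpa using (this.tendsto 0).mono_left nhdsWithin_le_nhds
    exact (eventually_mem_nhdsWithin.and (hlim.eventually (gt_mem_nhds h))).exists

lemma strictMonoOn_add_sqrt_sq_sub (D : ℝ) :
    StrictMonoOn (fun x : ℝ => x + √(x ^ 2 - D)) (Set.Ici 0) := by
  intro x hx y _ hxy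
  have : x ^ 2 ≤ y ^ 2 := pow_le_pow_left₀ hx hxy.le 2
  exact add_lt_add_of_lt_of_le hxy (Real.sqrt_le_sqrt (by linarith))

lemma sub_sqrt_sq_sub_eq_div {D x : ℝ} (hD : D ≠ 0) (hDx : D ≤ x ^ 2) :
    x - √(x ^ 2 - D) = D / (x + √(x ^ 2 - D)) := by
  have hsq : √(x ^ 2 - D) ^ 2 = x ^ 2 - D := Real.sq_sqrt (by linarith)
  have hprod : (x - √(x ^ 2 - D)) * (x + √(x ^ 2 - D)) = D := by linear_combination -hsq
  exact eq_div_of_mul_eq (right_ne_zero_of_mul (hprod ▸ hD)) hprod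

lemma sub_sqrt_sq_sub_lt_iff {D x x₀ : ℝ} (hD : 0 < D) (hx : 0 ≤ x) (hx₀ : 0 ≤ x₀)
    (hDx : D ≤ x ^ 2) (hDx₀ : D ≤ x₀ ^ 2) :
    x - √(x ^ 2 - D) < x₀ - √(x₀ ^ 2 - D) ↔ x₀ < x := by
  have hpos : ∀ z, 0 ≤ z → D ≤ z ^ 2 → 0 < z + √(z ^ 2 - D) := fun z hz hDz => by
    have : 0 < z := by nlinarith
    positivity
  rw [sub_sqrt_sq_sub_eq_div hD.ne' hDx, sub_sqrt_sq_sub_eq_div hD.ne' hDx₀,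
    div_lt_div_iff_of_pos_left hD (hpos x hx hDx) (hpos x₀ hx₀ hDx₀)]
  exact (strictMonoOn_add_sqrt_sq_sub D).lt_iff_lt hx₀ hx

theorem N_nonempty_iff (σ2 V δ β : ℝ)
    (hσ : 0 < σ2) (hV0 : 0 < V) (hV1 : V ≤ 1 / 2) (hδ : 0 < δ)
    (hβ : 4 * σ2 * V * (1 + 4 * δ) ≤ β) :
    let γ := (β - 4 * σ2 * V * (1 + 2 * δ)
        - Real.sqrt (β - 4 * σ2 * V) * Real.sqrt (β - 4 * σ2 * V * (1 + 4 * δ)))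
        / (16 * σ2 * δ * V ^ 2)
    ({ν : ℝ | 0 < ν ∧ (1 + ν) * γ < 1}).Nonempty
      ↔ 4 * σ2 * V + 2 * σ2 * δ * (1 + 2 * V) ^ 2 < β := by
  set b := √(β - 4 * σ2 * V)
  set e := √(2 * σ2 * δ)
  set D := 16 * σ2 * δ * V with hD_def
  intro γ
  rw [setOf_pos_add_one_mul_lt_one_nonempty_iff]
  have hb : b ^ 2 = β - 4 * σ2 * V := Real.sq_sqrt (by nlinarith [mul_pos (mul_pos hσ hV0) hδ])
  have he : e ^ 2 = 2 * σ2 * δ := Real.sq_sqrt (by positivity)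
  have hD : 0 < D := by positivity
  have hDb : D ≤ b ^ 2 := by linarith
  have hc : β - 4 * σ2 * V * (1 + 4 * δ) = b ^ 2 - D := by rw [hb]; ring
  have hc2 : √(b ^ 2 - D) ^ 2 = b ^ 2 - D := Real.sq_sqrt (by linarith)
  have hcb : √(b ^ 2 - D) ≤ b := Real.sqrt_le_iff.mpr ⟨Real.sqrt_nonneg _, by linarith⟩
  have hx₀ : (e * (1 + 2 * V)) ^ 2 - D = (e * (1 - 2 * V)) ^ 2 := by
    linear_combination 8 * V * he
  have hγ : γ = (b - √(b ^ 2 - D)) ^ 2 / (32 * σ2 * δ * V ^ 2) := by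
    simp only [γ]
    rw [hc, div_eq_div_iff (by positivity) (by positivity)]
    linear_combination (16 * σ2 * δ * V ^ 2) * (-2 * hb - hc2 + hD_def)
  calc γ < 1 ↔ (b - √(b ^ 2 - D)) ^ 2 < (4 * e * V) ^ 2 := by
        rw [hγ, div_lt_one (by positivity), mul_pow, mul_pow, he]; ring_nf
    _ ↔ b - √(b ^ 2 - D) < 4 * e * V :=
        pow_lt_pow_iff_left₀ (sub_nonneg.mpr hcb) (by positivity) two_ne_zero
    _ ↔ b - √(b ^ 2 - D) < e * (1 + 2 * V) - √((e * (1 + 2 * V)) ^ 2 - D) := by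
        have he' : 0 ≤ e * (1 - 2 * V) := mul_nonneg (Real.sqrt_nonneg _) (by linarith)
        rw [hx₀, Real.sqrt_sq he']; ring_nf
    _ ↔ e * (1 + 2 * V) < b :=
        sub_sqrt_sq_sub_lt_iff hD (Real.sqrt_nonneg _) (by positivity) hDb
          (by linarith [sq_nonneg (e * (1 - 2 * V))])
    _ ↔ (e * (1 + 2 * V)) ^ 2 < b ^ 2 :=
        (pow_lt_pow_iff_left₀ (by positivity) (Real.sqrt_nonneg _) two_ne_zero).symm
    _ ↔ _ := by rw [hb, mul_pow, he, lt_sub_iff_add_lt']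
end
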